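/- Let q be a prime power, N ≥ 3 an integer, A a finite cap in PG(N,q), and let Ω be the set of points u of PG(N,q) with u ∉ A such that no two distinct points of A are collinear with u. Let S ⊆ Ω be finite, p ∈ [0,1], and let B be a p-random subset of S. Define M(B) = {x ∈ B : there do not exist distinct points w₁, w₂ ∈ (A ∪ B) \ {x} such that x, w₁, w₂ are collinear}. Then for every v ∈ Ω, the probability of the event [v ∈ B, or there exist distinct points w₁, w₂ ∈ A ∪ M(B), both different from v, such that v, w₁, w₂ are collinear] is at least p · min_{u∈Ω} |A_S(u)| − 2p² · (max_{u∈Ω} |A_S(u)|)² − p³ · max_{u∈Ω} |A_S(u)| · max_{u∈Ω} |T_S(u)|. -/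

import Mathlib

open Projectivization MeasureTheory

/-- Three points of a projective space are collinear if their representative vectors span a
linear subspace of dimension at most `2`. -/
def Collin3 {F : Type*} [Field F] {V : Type*} [AddCommGroup V] [Module F V]
    (x y z : Projectivization F V) : Prop :=
  Module.finrank F ↥(x.submodule ⊔ y.submodule ⊔ z.submodule) ≤ 2

/-- A cap is a set of points no three of which are pairwise distinct and collinear. -/
def IsCap {F : Type*} [Field F] {V : Type*} [AddCommGroup V] [Module F V]
    (A : Set (Projectivization F V)) : Prop :=
  ∀ x ∈ A, ∀ y ∈ A, ∀ z ∈ A, x ≠ y → x ≠ z → y ≠ z → ¬ Collin3 x y z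

/-- The Bernoulli measure with parameter `p` on `Bool` (for `p ∈ [0,1]`). -/
noncomputable def bernoulliMeasure (p : ℝ) : Measure Bool :=
  (PMF.bernoulli (min (Real.toNNReal p) 1) (min_le_right _ _)).toMeasure

/-- The law of a `p`-random subset of the finite set `S`: every element of `S` is included
independently with probability `p`. -/
noncomputable def nibbleMeasure {α : Type*} (S : Finset α) (p : ℝ) :
    Measure (↥S → Bool) :=
  Measure.pi fun _ => bernoulliMeasure p

/-- The random subset of `S` corresponding to the sample `ω`. -/
def chosenSet {α : Type*} (S : Finset α) (ω : ↥S → Bool) : Set α :=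
  {x | ∃ h : x ∈ S, ω ⟨x, h⟩ = true}

/-- `A_S(v)`: the points of `S \ {v}` collinear with `v` and some point of `A`. -/
def capCone {F : Type*} [Field F] {V : Type*} [AddCommGroup V] [Module F V]
    (A : Set (Projectivization F V)) (S : Finset (Projectivization F V))
    (v : Projectivization F V) : Set (Projectivization F V) :=
  {x | x ∈ S ∧ x ≠ v ∧ ∃ u ∈ A, v ≠ x ∧ v ≠ u ∧ x ≠ u ∧ Collin3 v x u}

/-- `T_S(v)`: the unordered pairs of distinct points of `S \ {v}` collinear with `v`. -/
def pairCone {F : Type*} [Field F] {V : Type*} [AddCommGroup V] [Module F V]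
    (S : Finset (Projectivization F V)) (v : Projectivization F V) :
    Set (Sym2 (Projectivization F V)) :=
  {s | ∃ x y, s = s(x, y) ∧ x ≠ y ∧ x ∈ S ∧ x ≠ v ∧ y ∈ S ∧ y ≠ v ∧ Collin3 v x y}

/-- `M(B)`: the points of `B` lying on no bisecant of `A ∪ B`. -/
def goodSubset {F : Type*} [Field F] {V : Type*} [AddCommGroup V] [Module F V]
    (A B : Set (Projectivization F V)) : Set (Projectivization F V) :=
  {x ∈ B | ¬ ∃ w₁ w₂, w₁ ∈ (A ∪ B) \ {x} ∧ w₂ ∈ (A ∪ B) \ {x} ∧ w₁ ≠ w₂ ∧ Collin3 x w₁ w₂}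

/-! If a point `x ∈ A_S(v)` survives in `M(B)`, the line through `v`, `x` and the point of `A`
witnessing `x ∈ A_S(v)` is a bisecant of `A ∪ M(B)` through `v`. By the Bonferroni inequality
the probability that some `x ∈ A_S(v)` survives is at least `∑ₓ P(x ∈ M(B))` minus at most
`|A_S(v)|² p²` for the pairwise intersections. Since `P(x ∈ B) = p`, it remains to bound the
probability that a chosen `x` is deleted: as no two points of `A` are collinear with `x ∈ Ω`,
this needs a point of `A_S(x)`, or both points of a pair in `T_S(x)`, to be chosen as well, so
`P(x ∈ B \ M(B)) ≤ |A_S(x)| p² + |T_S(x)| p³`. -/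

theorem sum_measureReal_le_measureReal_biUnion_add_sum_offDiag {ι Ω : Type*} [DecidableEq ι]
    [MeasurableSpace Ω] (μ : Measure Ω) [IsFiniteMeasure μ] (C : Finset ι) {E : ι → Set Ω}
    (hE : ∀ i ∈ C, MeasurableSet (E i)) :
    ∑ i ∈ C, μ.real (E i) ≤ μ.real (⋃ i ∈ C, E i) + ∑ q ∈ C.offDiag, μ.real (E q.1 ∩ E q.2) := by
  induction C using Finset.induction with
  | empty => simp
  | @insert a C ha ih =>
    have hE' : ∀ i ∈ C, MeasurableSet (E i) := fun i hi => hE i (Finset.mem_insert_of_mem hi)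
    have hunion : μ.real (E a) + μ.real (⋃ i ∈ C, E i) ≤
        μ.real (⋃ i ∈ insert a C, E i) + ∑ i ∈ C, μ.real (E a ∩ E i) := by
      rw [← measureReal_union_add_inter (μ := μ) (s := E a) (C.measurableSet_biUnion hE')
        (measure_ne_top _ _) (measure_ne_top _ _), Set.inter_iUnion₂, Finset.set_biUnion_insert]
      gcongr
      exact measureReal_biUnion_finset_le _ _
    have hpairs : ∑ q ∈ C.offDiag, μ.real (E q.1 ∩ E q.2) + ∑ i ∈ C, μ.real (E a ∩ E i) ≤
        ∑ q ∈ (insert a C).offDiag, μ.real (E q.1 ∩ E q.2) := by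
      rw [Finset.offDiag_insert ha, Finset.sum_union, Finset.sum_union, Finset.sum_product,
        Finset.sum_singleton]
      · have : 0 ≤ ∑ q ∈ C ×ˢ {a}, μ.real (E q.1 ∩ E q.2) :=
          Finset.sum_nonneg fun _ _ => measureReal_nonneg
        linarith
      all_goals
        rw [Finset.disjoint_left]
        rintro ⟨x, y⟩
        simp only [Finset.mem_union, Finset.mem_offDiag, Finset.mem_product, Finset.mem_singleton]
        grind
    rw [Finset.sum_insert ha]
    linarith [ih hE']

section Nibble

variable {α : Type*} (S : Finset α) {p : ℝ}

instance (p : ℝ) : IsProbabilityMeasure (bernoulliMeasure p) :=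
  PMF.toMeasure.isProbabilityMeasure _

instance (p : ℝ) : IsProbabilityMeasure (nibbleMeasure S p) := by
  unfold nibbleMeasure; infer_instance

theorem bernoulliMeasure_singleton_true (hp1 : p ≤ 1) :
    bernoulliMeasure p {true} = ENNReal.ofReal p := by
  rw [bernoulliMeasure, PMF.toMeasure_apply_singleton _ _ (measurableSet_singleton _)]
  exact congrArg ((↑) : NNReal → ENNReal) (min_eq_left (Real.toNNReal_le_one.2 hp1))

theorem nibbleMeasure_real_subset_chosenSet (hp0 : 0 ≤ p) (hp1 : p ≤ 1) {t : Finset α}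
    (ht : t ⊆ S) : (nibbleMeasure S p).real {ω | ↑t ⊆ chosenSet S ω} = p ^ t.card := by
  classical
  let t' : Finset ↥S := t.subtype (· ∈ S)
  have hevent : {ω | ↑t ⊆ chosenSet S ω} =
      Set.univ.pi fun i => if i ∈ t' then {true} else Set.univ := by
    ext ω
    simp only [Set.mem_ofPred_eq, Set.subset_def, chosenSet, Set.mem_pi, Set.mem_univ,
      true_implies, t', Finset.mem_subtype, Finset.mem_coe]
    refine ⟨fun h i => ?_, fun h x hx => ⟨ht hx, ?_⟩⟩
    · split_ifs with hi
      · exact (h i hi).2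
      · trivial
    · simpa [hx] using h ⟨x, ht hx⟩
  have hcard : t'.card = t.card := by
    rw [Finset.card_subtype, Finset.filter_true_of_mem ht]
  rw [measureReal_def, hevent, nibbleMeasure, Measure.pi_pi]
  simp only [apply_ite (bernoulliMeasure p), measure_univ, Fintype.prod_ite_mem,
    Finset.prod_const, bernoulliMeasure_singleton_true hp1, hcard]
  simp [hp0]

theorem nibbleMeasure_real_mem_chosenSet (hp0 : 0 ≤ p) (hp1 : p ≤ 1) {x : α} (hx : x ∈ S) :
    (nibbleMeasure S p).real {ω | x ∈ chosenSet S ω} = p := by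
  simpa using nibbleMeasure_real_subset_chosenSet S hp0 hp1 (t := {x}) (by simpa using hx)

theorem nibbleMeasure_real_mem_chosenSet_and (hp0 : 0 ≤ p) (hp1 : p ≤ 1) {x y : α}
    (hx : x ∈ S) (hy : y ∈ S) (hxy : x ≠ y) :
    (nibbleMeasure S p).real {ω | x ∈ chosenSet S ω ∧ y ∈ chosenSet S ω} = p ^ 2 := by
  classical
  have := nibbleMeasure_real_subset_chosenSet S hp0 hp1 (t := {x, y})
    (by simp [Finset.insert_subset_iff, hx, hy])
  simpa [Finset.card_pair hxy, Set.insert_subset_iff] using this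

theorem sum_offDiag_nibbleMeasure_real_inter_le (hp0 : 0 ≤ p) (hp1 : p ≤ 1) {C : Finset α}
    (hC : C ⊆ S) {E : α → Set (↥S → Bool)} (hE : ∀ x ∈ C, E x ⊆ {ω | x ∈ chosenSet S ω}) :
    ∑ q ∈ C.offDiag, (nibbleMeasure S p).real (E q.1 ∩ E q.2) ≤ C.card ^ 2 * p ^ 2 := by
  have hcard : C.offDiag.card ≤ C.card ^ 2 := by
    rw [Finset.offDiag_card, sq]; exact Nat.sub_le _ _
  calc _ ≤ ∑ _q ∈ C.offDiag, p ^ 2 := Finset.sum_le_sum fun q hq => by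
        obtain ⟨hx, hy, hxy⟩ := Finset.mem_offDiag.1 hq
        rw [← nibbleMeasure_real_mem_chosenSet_and S hp0 hp1 (hC hx) (hC hy) hxy]
        exact measureReal_mono fun ω hω => ⟨hE _ hx hω.1, hE _ hy hω.2⟩
    _ ≤ _ := by rw [Finset.sum_const, nsmul_eq_mul]; gcongr; exact_mod_cast hcard

end Nibble

section Geometry

variable {F V : Type*} [Field F] [AddCommGroup V] [Module F V]

def LiesOnSecant (X : Set (Projectivization F V)) (v : Projectivization F V) : Prop :=
  ∃ w₁ w₂, w₁ ∈ X ∧ w₂ ∈ X ∧ w₁ ≠ w₂ ∧ w₁ ≠ v ∧ w₂ ≠ v ∧ Collin3 v w₁ w₂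

variable {A B : Set (Projectivization F V)} {S : Finset (Projectivization F V)}
  {v x : Projectivization F V}

theorem Collin3.swap_right {y z : Projectivization F V} (h : Collin3 x y z) : Collin3 x z y := by
  rwa [Collin3, sup_right_comm]

theorem mem_goodSubset_iff : x ∈ goodSubset A B ↔ x ∈ B ∧ ¬ LiesOnSecant (A ∪ B) x := by
  simp only [goodSubset, LiesOnSecant, Set.mem_sdiff, Set.mem_singleton_iff, Set.mem_ofPred_eq]
  grind

theorem liesOnSecant_union_goodSubset_of_mem_capCone (hx : x ∈ capCone A S v)
    (hxB : x ∈ goodSubset A B) : LiesOnSecant (A ∪ goodSubset A B) v := by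
  obtain ⟨-, -, u, hu, hvx, hvu, hxu, hcol⟩ := hx
  exact ⟨x, u, .inr hxB, .inl hu, hxu, hvx.symm, hvu.symm, hcol⟩

theorem exists_mem_capCone_or_pairCone_of_not_mem_goodSubset (hBS : B ⊆ S)
    (hx : ¬ LiesOnSecant A x) (hxB : x ∈ B) (hxM : x ∉ goodSubset A B) :
    (∃ w ∈ capCone A S x, w ∈ B) ∨ ∃ s ∈ pairCone S x, ∀ y ∈ s, y ∈ B := by
  rw [mem_goodSubset_iff, not_and, not_not] at hxM
  obtain ⟨w₁, w₂, hw₁ | hw₁, hw₂ | hw₂, hne, hw₁x, hw₂x, hcol⟩ := hxM hxB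
  · exact absurd ⟨w₁, w₂, hw₁, hw₂, hne, hw₁x, hw₂x, hcol⟩ hx
  · exact .inl ⟨w₂, ⟨hBS hw₂, hw₂x, w₁, hw₁, hw₂x.symm, hw₁x.symm, hne.symm, hcol.swap_right⟩, hw₂⟩
  · exact .inl ⟨w₁, ⟨hBS hw₁, hw₁x, w₂, hw₂, hw₁x.symm, hw₂x.symm, hne, hcol⟩, hw₁⟩
  · refine .inr ⟨s(w₁, w₂), ⟨w₁, w₂, rfl, hne, hBS hw₁, hw₁x, hBS hw₂, hw₂x, hcol⟩, ?_⟩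
    intro y hy
    rcases Sym2.mem_iff.1 hy with rfl | rfl <;> assumption

theorem capCone_subset : capCone A S v ⊆ S := fun _ hx => hx.1

theorem capCone_finite : (capCone A S v).Finite := S.finite_toSet.subset capCone_subset

theorem ncard_capCone_le_card : (capCone A S v).ncard ≤ S.card :=
  (Set.ncard_le_ncard capCone_subset S.finite_toSet).trans_eq (Set.ncard_coe_finset S)

theorem pairCone_subset_sym2 : pairCone S v ⊆ S.sym2 := by
  rintro _ ⟨y, z, rfl, -, hy, -, hz, -⟩
  simp [hy, hz]

theorem pairCone_finite : (pairCone S v).Finite :=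
  S.sym2.finite_toSet.subset pairCone_subset_sym2

theorem ncard_pairCone_le_card_sym2 : (pairCone S v).ncard ≤ S.sym2.card :=
  (Set.ncard_le_ncard pairCone_subset_sym2 S.sym2.finite_toSet).trans_eq (Set.ncard_coe_finset _)

end Geometry

section Deletion

variable {F V : Type*} [Field F] [AddCommGroup V] [Module F V]
  {A : Set (Projectivization F V)} {S : Finset (Projectivization F V)} {p : ℝ}

theorem nibbleMeasure_real_not_mem_goodSubset_le (hp0 : 0 ≤ p) (hp1 : p ≤ 1)
    {x : Projectivization F V} (hxS : x ∈ S) (hx : ¬ LiesOnSecant A x) :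
    (nibbleMeasure S p).real {ω | x ∈ chosenSet S ω ∧ x ∉ goodSubset A (chosenSet S ω)} ≤
      (capCone A S x).ncard * p ^ 2 + (pairCone S x).ncard * p ^ 3 := by
  classical
  set μ := nibbleMeasure S p
  have hC := capCone_finite (A := A) (S := S) (v := x)
  have hT := pairCone_finite (S := S) (v := x)
  have hcover : {ω | x ∈ chosenSet S ω ∧ x ∉ goodSubset A (chosenSet S ω)} ⊆
      (⋃ w ∈ hC.toFinset, {ω | x ∈ chosenSet S ω ∧ w ∈ chosenSet S ω}) ∪
        ⋃ s ∈ hT.toFinset, {ω | ↑(insert x s.toFinset) ⊆ chosenSet S ω} := by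
    rintro ω ⟨hxB, hxM⟩
    rcases exists_mem_capCone_or_pairCone_of_not_mem_goodSubset (fun _ hy => hy.1) hx hxB hxM
      with ⟨w, hw, hwB⟩ | ⟨s, hs, hsB⟩
    · exact .inl (Set.mem_biUnion (hC.mem_toFinset.2 hw) ⟨hxB, hwB⟩)
    · refine .inr (Set.mem_biUnion (hT.mem_toFinset.2 hs) ?_)
      simpa [Set.insert_subset_iff, hxB, Set.subset_def] using hsB
  have hpair : ∀ w ∈ hC.toFinset,
      μ.real {ω | x ∈ chosenSet S ω ∧ w ∈ chosenSet S ω} = p ^ 2 := by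
    intro w hw
    obtain ⟨hwS, hwx, -⟩ := hC.mem_toFinset.1 hw
    exact nibbleMeasure_real_mem_chosenSet_and S hp0 hp1 hxS hwS hwx.symm
  have htriple : ∀ s ∈ hT.toFinset,
      μ.real {ω | ↑(insert x s.toFinset) ⊆ chosenSet S ω} = p ^ 3 := by
    intro s hs
    obtain ⟨y, z, rfl, hyz, hyS, hyx, hzS, hzx, -⟩ := hT.mem_toFinset.1 hs
    rw [nibbleMeasure_real_subset_chosenSet S hp0 hp1 ?_, Finset.card_insert_of_notMem ?_,
      Sym2.card_toFinset_of_not_isDiag _ (Sym2.mk_isDiag_iff.not.2 hyz)]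
    · simp [hyx.symm, hzx.symm]
    · simp [Finset.subset_iff, hxS, hyS, hzS]
  calc _ ≤ _ := measureReal_mono hcover
    _ ≤ ∑ w ∈ hC.toFinset, μ.real {ω | x ∈ chosenSet S ω ∧ w ∈ chosenSet S ω} +
          ∑ s ∈ hT.toFinset, μ.real {ω | ↑(insert x s.toFinset) ⊆ chosenSet S ω} :=
      (measureReal_union_le _ _).trans
        (add_le_add (measureReal_biUnion_finset_le _ _) (measureReal_biUnion_finset_le _ _))
    _ = _ := by
      rw [Finset.sum_congr rfl hpair, Finset.sum_congr rfl htriple, Finset.sum_const,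
        Finset.sum_const, nsmul_eq_mul, nsmul_eq_mul, Set.ncard_eq_toFinset_card _ hC,
        Set.ncard_eq_toFinset_card _ hT]

theorem mul_ncard_capCone_le (hp0 : 0 ≤ p) (hp1 : p ≤ 1) (hS : ∀ x ∈ S, ¬ LiesOnSecant A x)
    {a t : ℕ} (ha : ∀ x ∈ S, (capCone A S x).ncard ≤ a) (ht : ∀ x ∈ S, (pairCone S x).ncard ≤ t)
    {v : Projectivization F V} (hv : (capCone A S v).ncard ≤ a) :
    p * (capCone A S v).ncard ≤
      (nibbleMeasure S p).real {ω | LiesOnSecant (A ∪ goodSubset A (chosenSet S ω)) v} +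
        2 * p ^ 2 * a ^ 2 + p ^ 3 * a * t := by
  classical
  set μ := nibbleMeasure S p
  have hC := capCone_finite (A := A) (S := S) (v := v)
  set C := hC.toFinset
  have hCS : C ⊆ S := fun _ hx => (hC.mem_toFinset.1 hx).1
  have hCa : (C.card : ℝ) ≤ a := by rw [← Set.ncard_eq_toFinset_card _ hC]; exact_mod_cast hv
  set M := fun x => {ω | x ∈ goodSubset A (chosenSet S ω)}
  set D := fun x => {ω | x ∈ chosenSet S ω ∧ x ∉ goodSubset A (chosenSet S ω)}
  have hsplit : ∀ x ∈ C, p ≤ μ.real (M x) + μ.real (D x) := by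
    intro x hx
    rw [← nibbleMeasure_real_mem_chosenSet S hp0 hp1 (hCS hx)]
    refine (measureReal_mono fun ω hω => ?_).trans (measureReal_union_le _ _)
    exact (em _).imp id fun hxM => ⟨hω, hxM⟩
  have hunion : μ.real (⋃ x ∈ C, M x) ≤
      μ.real {ω | LiesOnSecant (A ∪ goodSubset A (chosenSet S ω)) v} :=
    measureReal_mono <| Set.iUnion₂_subset fun x hx _ =>
      liesOnSecant_union_goodSubset_of_mem_capCone (hC.mem_toFinset.1 hx)
  have hoffDiag := sum_offDiag_nibbleMeasure_real_inter_le S hp0 hp1 hCS (E := M)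
    fun _ _ _ hω => hω.1
  have hdel : ∑ x ∈ C, μ.real (D x) ≤ C.card * (a * p ^ 2 + t * p ^ 3) := by
    rw [← nsmul_eq_mul, ← Finset.sum_const]
    refine Finset.sum_le_sum fun x hx => ?_
    refine (nibbleMeasure_real_not_mem_goodSubset_le hp0 hp1 (hCS hx) (hS x (hCS hx))).trans ?_
    gcongr
    · exact_mod_cast ha x (hCS hx)
    · exact_mod_cast ht x (hCS hx)
  have hbonf := sum_measureReal_le_measureReal_biUnion_add_sum_offDiag μ C
    (fun x _ => (M x).toFinite.measurableSet)
  have hsum : p * (capCone A S v).ncard ≤ ∑ x ∈ C, μ.real (M x) + ∑ x ∈ C, μ.real (D x) := by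
    rw [Set.ncard_eq_toFinset_card _ hC, mul_comm, ← nsmul_eq_mul, ← Finset.sum_const,
      ← Finset.sum_add_distrib]
    exact Finset.sum_le_sum hsplit
  have : (C.card : ℝ) * (a * p ^ 2 + t * p ^ 3) ≤ a * (a * p ^ 2 + t * p ^ 3) := by gcongr
  have : (C.card : ℝ) ^ 2 * p ^ 2 ≤ a ^ 2 * p ^ 2 := by gcongr
  linarith

end Deletion

theorem deletion_probability_lower_bound_general
    (F : Type) [Field F] (N : ℕ)
    (A : Finset (Projectivization F (Fin (N + 1) → F)))
    (Ω : Set (Projectivization F (Fin (N + 1) → F)))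
    (hΩ : Ω = {u | u ∉ A ∧ ∀ w₁ ∈ A, ∀ w₂ ∈ A, w₁ ≠ w₂ → ¬ Collin3 u w₁ w₂})
    (S : Finset (Projectivization F (Fin (N + 1) → F)))
    (hSΩ : (S : Set (Projectivization F (Fin (N + 1) → F))) ⊆ Ω)
    (p : ℝ) (hp0 : 0 ≤ p) (hp1 : p ≤ 1)
    (v : Projectivization F (Fin (N + 1) → F)) (hv : v ∈ Ω) :
    nibbleMeasure S p
      {ω | v ∈ chosenSet S ω ∨
        ∃ w₁ w₂,
          (w₁ ∈ (A : Set _) ∪ goodSubset (A : Set _) (chosenSet S ω)) ∧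
          (w₂ ∈ (A : Set _) ∪ goodSubset (A : Set _) (chosenSet S ω)) ∧
          w₁ ≠ w₂ ∧ w₁ ≠ v ∧ w₂ ≠ v ∧ Collin3 v w₁ w₂} ≥
    ENNReal.ofReal
      (p * ((sInf {n : ℕ | ∃ u ∈ Ω, n = (capCone (A : Set _) S u).ncard} : ℕ) : ℝ) -
        2 * p ^ 2 * ((sSup {n : ℕ | ∃ u ∈ Ω, n = (capCone (A : Set _) S u).ncard} : ℕ) : ℝ) ^ 2 -
        p ^ 3 * ((sSup {n : ℕ | ∃ u ∈ Ω, n = (capCone (A : Set _) S u).ncard} : ℕ) : ℝ) *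
          ((sSup {n : ℕ | ∃ u ∈ Ω, n = (pairCone S u).ncard} : ℕ) : ℝ)) := by
  have hΩsecant : ∀ u ∈ Ω, ¬ LiesOnSecant (A : Set _) u := by
    rintro u hu ⟨w₁, w₂, hw₁, hw₂, hne, -, -, hcol⟩
    exact (hΩ ▸ hu).2 w₁ hw₁ w₂ hw₂ hne hcol
  have hbddC : BddAbove {n : ℕ | ∃ u ∈ Ω, n = (capCone (A : Set _) S u).ncard} :=
    ⟨S.card, by rintro _ ⟨u, -, rfl⟩; exact ncard_capCone_le_card⟩
  have hbddT : BddAbove {n : ℕ | ∃ u ∈ Ω, n = (pairCone S u).ncard} :=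
    ⟨S.sym2.card, by rintro _ ⟨u, -, rfl⟩; exact ncard_pairCone_le_card_sym2⟩
  have hmain := mul_ncard_capCone_le hp0 hp1 (fun x hx => hΩsecant x (hSΩ hx))
    (fun x hx => le_csSup hbddC ⟨x, hSΩ hx, rfl⟩) (fun x hx => le_csSup hbddT ⟨x, hSΩ hx, rfl⟩)
    (le_csSup hbddC ⟨v, hv, rfl⟩)
  have hinf : ((sInf {n : ℕ | ∃ u ∈ Ω, n = (capCone (A : Set _) S u).ncard} : ℕ) : ℝ) ≤
      (capCone (A : Set _) S v).ncard :=
    Nat.cast_le.2 (Nat.sInf_le ⟨v, hv, rfl⟩)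
  have hevent : {ω | LiesOnSecant ((A : Set _) ∪ goodSubset A (chosenSet S ω)) v} ⊆
      {ω | v ∈ chosenSet S ω ∨ LiesOnSecant ((A : Set _) ∪ goodSubset A (chosenSet S ω)) v} :=
    fun _ => Or.inr
  refine ENNReal.ofReal_le_of_le_toReal ((?_ : _ ≤ _).trans (measureReal_mono hevent))
  linarith [mul_le_mul_of_nonneg_left hinf hp0]

/-- Lower bound for the probability that a point `v ∈ Ω` either is chosen in the nibble `B` or
lies on a bisecant of `A ∪ M(B)`. -/
theorem deletion_probability_lower_bound
    (F : Type) [Field F] [Fintype F] (N : ℕ) (hN : 3 ≤ N)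
    (A : Finset (Projectivization F (Fin (N + 1) → F)))
    (hA : IsCap (A : Set (Projectivization F (Fin (N + 1) → F))))
    (Ω : Set (Projectivization F (Fin (N + 1) → F)))
    (hΩ : Ω = {u | u ∉ A ∧ ∀ w₁ ∈ A, ∀ w₂ ∈ A, w₁ ≠ w₂ → ¬ Collin3 u w₁ w₂})
    (S : Finset (Projectivization F (Fin (N + 1) → F)))
    (hSΩ : (S : Set (Projectivization F (Fin (N + 1) → F))) ⊆ Ω)
    (p : ℝ) (hp0 : 0 ≤ p) (hp1 : p ≤ 1)
    (v : Projectivization F (Fin (N + 1) → F)) (hv : v ∈ Ω) :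
    nibbleMeasure S p
      {ω | v ∈ chosenSet S ω ∨
        ∃ w₁ w₂,
          (w₁ ∈ (A : Set _) ∪ goodSubset (A : Set _) (chosenSet S ω)) ∧
          (w₂ ∈ (A : Set _) ∪ goodSubset (A : Set _) (chosenSet S ω)) ∧
          w₁ ≠ w₂ ∧ w₁ ≠ v ∧ w₂ ≠ v ∧ Collin3 v w₁ w₂} ≥
    ENNReal.ofReal
      (p * ((sInf {n : ℕ | ∃ u ∈ Ω, n = (capCone (A : Set _) S u).ncard} : ℕ) : ℝ) -
        2 * p ^ 2 * ((sSup {n : ℕ | ∃ u ∈ Ω, n = (capCone (A : Set _) S u).ncard} : ℕ) : ℝ) ^ 2 -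
        p ^ 3 * ((sSup {n : ℕ | ∃ u ∈ Ω, n = (capCone (A : Set _) S u).ncard} : ℕ) : ℝ) *
          ((sSup {n : ℕ | ∃ u ∈ Ω, n = (pairCone S u).ncard} : ℕ) : ℝ)) :=
  deletion_probability_lower_bound_general F N A Ω hΩ S hSΩ p hp0 hp1 v hv
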